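/- Let M > 0 and E ∈ (√(25/27), 1), and set L_E = (M/√2)·ζ⁻¹(E²), where ζ is the auxiliary function on (4√2, ∞). Then the set Λ_E ∩ ({−1/2} × ℝ) = {L : (−1/2, L) ∈ Λ_E} equals the open interval (4M, L_E), where Λ_E = {(H, L) : H < 0, L > 4√2·√(−H)·M, −H·ζ(L/(√(−H)M)) < E²/2 < −H}. -/
import Mathlib


open Real Set

noncomputable def zet (u : ℝ) : ℝ :=
  (u ^ 4 - 20 * u ^ 2 + 32 + u * (u ^ 2 - 8) * Real.sqrt (u ^ 2 - 24)) /
    (u ^ 4 - 18 * u ^ 2 + u * (u ^ 2 - 6) * Real.sqrt (u ^ 2 - 24))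

noncomputable def phi (t : ℝ) : ℝ := 2 * (t + 2) ^ 2 / (9 * (t + 1))

lemma phi_lt {a b : ℝ} (ha : 0 < a) (hb : 0 < b) : phi a < phi b ↔ a < b := by
  unfold phi
  rw [div_lt_div_iff₀ (by positivity) (by positivity)]
  constructor
  · intro h
    by_contra hc
    push_neg at hc
    nlinarith [mul_pos ha hb, mul_nonneg (mul_nonneg ha.le hb.le) (sub_nonneg.2 hc)]
  · intro h
    nlinarith [mul_pos ha hb, mul_pos (mul_pos ha hb) (sub_pos.2 h)]

lemma sq_gt_32 {u : ℝ} (hu : 4 * Real.sqrt 2 < u) : 32 < u ^ 2 := by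
  have h2 : Real.sqrt 2 ^ 2 = 2 := Real.sq_sqrt (by norm_num)
  have h0 : 0 < Real.sqrt 2 := Real.sqrt_pos.2 (by norm_num)
  nlinarith

lemma zeta_eq {u : ℝ} (hu : 4 * Real.sqrt 2 < u) :
    zet u = phi (Real.sqrt (u ^ 2 - 24) / u) := by
  have h32 : 32 < u ^ 2 := sq_gt_32 hu
  have hu0 : 0 < u := lt_trans (by positivity) hu
  set s := Real.sqrt (u ^ 2 - 24) with hs_def
  have hs : s ^ 2 = u ^ 2 - 24 := Real.sq_sqrt (by nlinarith)
  have hs0 : 0 ≤ s := Real.sqrt_nonneg _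
  have hsu : s < u := by nlinarith
  have hD : 0 < u ^ 4 - 18 * u ^ 2 + u * (u ^ 2 - 6) * s := by
    nlinarith [mul_pos (by nlinarith : (0:ℝ) < u ^ 2) (by nlinarith : (0:ℝ) < u ^ 2 - 18),
      mul_nonneg (mul_nonneg hu0.le (by nlinarith : (0:ℝ) ≤ u ^ 2 - 6)) hs0]
  have hphi : phi (s / u) = 2 * (s + 2 * u) ^ 2 / (9 * (u * (s + u))) := by
    unfold phi
    rw [div_eq_div_iff (by positivity) (by positivity)]
    field_simp
  rw [hphi]
  unfold zet
  rw [← hs_def, div_eq_div_iff (ne_of_gt hD) (by positivity)]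
  linear_combination ((-2 * u ^ 3 + 12 * u) * s - u ^ 4 + 12 * u ^ 2) * hs

lemma t_pos {u : ℝ} (hu : 4 * Real.sqrt 2 < u) :
    0 < Real.sqrt (u ^ 2 - 24) / u := by
  have h32 : 32 < u ^ 2 := sq_gt_32 hu
  have hu0 : 0 < u := lt_trans (by positivity) hu
  exact div_pos (Real.sqrt_pos.2 (by nlinarith)) hu0

lemma t_mono {u v : ℝ} (hu : 4 * Real.sqrt 2 < u) (hv : 4 * Real.sqrt 2 < v)
    (huv : u < v) :
    Real.sqrt (u ^ 2 - 24) / u < Real.sqrt (v ^ 2 - 24) / v := by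
  have h32u : 32 < u ^ 2 := sq_gt_32 hu
  have h32v : 32 < v ^ 2 := sq_gt_32 hv
  have hu0 : 0 < u := lt_trans (by positivity) hu
  have hv0 : 0 < v := lt_trans (by positivity) hv
  rw [div_lt_div_iff₀ hu0 hv0]
  have hsq : (Real.sqrt (u ^ 2 - 24) * v) ^ 2 < (Real.sqrt (v ^ 2 - 24) * u) ^ 2 := by
    rw [mul_pow, mul_pow, Real.sq_sqrt (by nlinarith), Real.sq_sqrt (by nlinarith)]
    nlinarith
  exact lt_of_pow_lt_pow_left₀ 2 (by positivity) hsq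

lemma zeta_lt_iff {u v : ℝ} (hu : 4 * Real.sqrt 2 < u) (hv : 4 * Real.sqrt 2 < v) :
    zet u < zet v ↔ u < v := by
  rw [zeta_eq hu, zeta_eq hv, phi_lt (t_pos hu) (t_pos hv)]
  constructor
  · intro h
    by_contra hc
    push_neg at hc
    rcases lt_or_eq_of_le hc with h' | h'
    · exact absurd (t_mono hv hu h') (not_lt.2 h.le)
    · rw [h'] at h; exact lt_irrefl _ h
  · exact t_mono hu hv

/-- For E ∈ (√(25/27), 1), the isoenergetic slice of the Schwarzschild admissibility
region Λ_E at H = −1/2 is the open interval (4M, L_E), where L_E = (M/√2) ζ⁻¹(E²). -/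
theorem schwarzschild_isoenergetic_slice
    (M E LE : ℝ) (hM : 0 < M)
    (hE : E ∈ Set.Ioo (Real.sqrt (25 / 27)) 1)
    (hLE1 : 4 * Real.sqrt 2 < Real.sqrt 2 * LE / M)
    (hLE2 : (fun u : ℝ =>
        (u ^ 4 - 20 * u ^ 2 + 32 + u * (u ^ 2 - 8) * Real.sqrt (u ^ 2 - 24)) /
          (u ^ 4 - 18 * u ^ 2 + u * (u ^ 2 - 6) * Real.sqrt (u ^ 2 - 24)))
        (Real.sqrt 2 * LE / M) = E ^ 2) :
    {L : ℝ | ((-1 : ℝ) / 2) < 0 ∧ 4 * Real.sqrt 2 * Real.sqrt (-((-1 : ℝ) / 2)) * M < L ∧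
        -((-1 : ℝ) / 2) * ((fun u : ℝ =>
            (u ^ 4 - 20 * u ^ 2 + 32 + u * (u ^ 2 - 8) * Real.sqrt (u ^ 2 - 24)) /
              (u ^ 4 - 18 * u ^ 2 + u * (u ^ 2 - 6) * Real.sqrt (u ^ 2 - 24)))
          (L / (Real.sqrt (-((-1 : ℝ) / 2)) * M))) < E ^ 2 / 2 ∧
        E ^ 2 / 2 < -((-1 : ℝ) / 2)} = Set.Ioo (4 * M) LE := by
  obtain ⟨hE1, hE2⟩ := hE
  have hEpos : 0 < E := lt_of_le_of_lt (Real.sqrt_nonneg _) hE1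
  have hE2sq : E ^ 2 < 1 := by nlinarith
  have h2 : Real.sqrt 2 ^ 2 = 2 := Real.sq_sqrt (by norm_num)
  have h2pos : 0 < Real.sqrt 2 := Real.sqrt_pos.2 (by norm_num)
  have hhalf : -((-1 : ℝ) / 2) = 1 / 2 := by norm_num
  have hsqrt_half : Real.sqrt (-((-1 : ℝ) / 2)) = (Real.sqrt 2)⁻¹ := by
    rw [hhalf, one_div, Real.sqrt_inv]
  have hfactor : 4 * Real.sqrt 2 * Real.sqrt (-((-1 : ℝ) / 2)) * M = 4 * M := by
    rw [hsqrt_half]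
    field_simp
  have hZE : zet (Real.sqrt 2 * LE / M) = E ^ 2 := hLE2
  ext L
  simp only [mem_setOf_eq, mem_Ioo, hfactor]
  have harg : L / (Real.sqrt (-((-1 : ℝ) / 2)) * M) = Real.sqrt 2 * L / M := by
    rw [hsqrt_half]
    field_simp
  rw [harg]
  constructor
  · rintro ⟨-, h1, h2', -⟩
    refine ⟨h1, ?_⟩
    have hZlt : zet (Real.sqrt 2 * L / M) < E ^ 2 := by
      have h2'' : -((-1 : ℝ) / 2) * zet (Real.sqrt 2 * L / M) < E ^ 2 / 2 := h2'
      rw [hhalf] at h2''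
      linarith
    have huL : 4 * Real.sqrt 2 < Real.sqrt 2 * L / M := by
      rw [lt_div_iff₀ hM]
      nlinarith
    have hlt : Real.sqrt 2 * L / M < Real.sqrt 2 * LE / M := by
      rw [← zeta_lt_iff huL hLE1, hZE]
      exact hZlt
    rw [div_lt_div_iff₀ hM hM] at hlt
    nlinarith [mul_pos h2pos hM]
  · rintro ⟨h1, h2'⟩
    have huL : 4 * Real.sqrt 2 < Real.sqrt 2 * L / M := by
      rw [lt_div_iff₀ hM]
      nlinarith
    have hlt : Real.sqrt 2 * L / M < Real.sqrt 2 * LE / M := by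
      rw [div_lt_div_iff₀ hM hM]
      nlinarith [mul_pos h2pos hM]
    have hZlt : zet (Real.sqrt 2 * L / M) < E ^ 2 := by
      rw [← hZE]
      exact (zeta_lt_iff huL hLE1).2 hlt
    refine ⟨by norm_num, h1, ?_, by rw [hhalf]; linarith⟩
    show -((-1 : ℝ) / 2) * zet (Real.sqrt 2 * L / M) < E ^ 2 / 2
    rw [hhalf]
    linarith
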